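/- Let r ≥ 3 and let λ = (λ_1,…,λ_r) ∈ ℝ^r satisfy λ_1 > λ_2 > … > λ_{r−1} > |λ_r|. Then the type D BZ-polytope BZ_λ has nonempty topological interior in ℝ^{r(r−1)}; equivalently, its affine dimension equals r(r−1). -/

import Mathlib

open scoped BigOperators

noncomputable section

/-- 1-based standard basis vector `e i` of `ℝ^r`. -/
def stdVec (r i : ℕ) : Fin r → ℝ := fun k => if (k : ℕ) + 1 = i then 1 else 0

/-- Type B/C BZ inequalities. -/
def IsBZBC (r : ℕ) (x y : ℕ → ℕ → ℝ) : Prop :=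
  (∀ i j, 1 ≤ i → i ≤ j → j ≤ r → y i j ≤ x i j) ∧
  (∀ i j, 1 ≤ i → i < j → j ≤ r → y i j ≤ x (i + 1) j) ∧
  (∀ i j, 1 ≤ i → i ≤ j → j + 1 ≤ r → x i (j + 1) ≤ y i j ∧ x (i + 1) (j + 1) ≤ y i j) ∧
  (∀ i, 1 ≤ i → i ≤ r → 0 ≤ y i r)

def BZsetBC (r : ℕ) (lam : ℕ → ℝ) : Set ((ℕ → ℕ → ℝ) × (ℕ → ℕ → ℝ)) :=
  {p | (∀ j, 1 ≤ j → j ≤ r → p.1 1 j = lam j) ∧ IsBZBC r p.1 p.2 ∧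
       (∀ i j, ¬(1 ≤ i ∧ i ≤ j ∧ j ≤ r) → p.1 i j = 0) ∧
       (∀ i j, ¬(1 ≤ i ∧ i ≤ j ∧ j ≤ r) → p.2 i j = 0)}

def wtBC (r : ℕ) (p : (ℕ → ℕ → ℝ) × (ℕ → ℕ → ℝ)) (i : ℕ) : ℝ :=
  (∑ j ∈ Finset.Icc i r, p.1 i j) + (∑ j ∈ Finset.Icc (i + 1) r, p.1 (i + 1) j)
    - 2 * ∑ j ∈ Finset.Icc i r, p.2 i j

def IsBZD (r : ℕ) (x y : ℕ → ℕ → ℝ) : Prop :=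
  (∀ i j, 1 ≤ i → i ≤ j → j + 1 ≤ r → y i j ≤ x i j) ∧
  (∀ i j, 1 ≤ i → i < j → j + 1 ≤ r → y i j ≤ x (i + 1) j) ∧
  (∀ i j, 1 ≤ i → i ≤ j → j + 1 ≤ r → x i (j + 1) ≤ y i j ∧ x (i + 1) (j + 1) ≤ y i j) ∧
  (∀ i, 1 ≤ i → i + 2 ≤ r → y i (r - 1) ≤ x i r + x (i + 1) r + min (x i (r - 1)) (x (i + 1) (r - 1))) ∧
  (y (r - 1) (r - 1) ≤ x (r - 1) r + x r r + x (r - 1) (r - 1))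

def BZsetD (r : ℕ) (lam : ℕ → ℝ) : Set ((ℕ → ℕ → ℝ) × (ℕ → ℕ → ℝ)) :=
  {p | (∀ j, 1 ≤ j → j ≤ r → p.1 1 j = lam j) ∧ IsBZD r p.1 p.2 ∧
       (∀ i j, ¬(1 ≤ i ∧ i ≤ j ∧ j ≤ r) → p.1 i j = 0) ∧
       (∀ i j, ¬(1 ≤ i ∧ i ≤ j ∧ j + 1 ≤ r) → p.2 i j = 0)}

def wtD (r : ℕ) (p : (ℕ → ℕ → ℝ) × (ℕ → ℕ → ℝ)) (i : ℕ) : ℝ :=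
  (∑ j ∈ Finset.Icc i r, p.1 i j) + (∑ j ∈ Finset.Icc (i + 1) r, p.1 (i + 1) j)
    - 2 * ∑ j ∈ Finset.Icc i (r - 1), p.2 i j

/-- Affine dimension of a subset of a real vector space. -/
def affDim {V : Type*} [AddCommGroup V] [Module ℝ V] (A : Set V) : ℕ :=
  Module.finrank ℝ (vectorSpan ℝ A)

def simpleRootB (r i : ℕ) : Fin r → ℝ :=
  if i = r then stdVec r r else stdVec r i - stdVec r (i + 1)

def simpleRootC (r i : ℕ) : Fin r → ℝ :=
  if i = r then (2 : ℝ) • stdVec r r else stdVec r i - stdVec r (i + 1)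

def simpleRootD (r i : ℕ) : Fin r → ℝ :=
  if i = r then stdVec r (r - 1) + stdVec r r else stdVec r i - stdVec r (i + 1)

def posRootsB (r : ℕ) : Set (Fin r → ℝ) :=
  {v | ∃ i j, 1 ≤ i ∧ i < j ∧ j ≤ r ∧ (v = stdVec r i - stdVec r j ∨ v = stdVec r i + stdVec r j)}
    ∪ {v | ∃ i, 1 ≤ i ∧ i ≤ r ∧ v = stdVec r i}

def posRootsC (r : ℕ) : Set (Fin r → ℝ) :=
  {v | ∃ i j, 1 ≤ i ∧ i < j ∧ j ≤ r ∧ (v = stdVec r i - stdVec r j ∨ v = stdVec r i + stdVec r j)}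
    ∪ {v | ∃ i, 1 ≤ i ∧ i ≤ r ∧ v = (2 : ℝ) • stdVec r i}

def posRootsD (r : ℕ) : Set (Fin r → ℝ) :=
  {v | ∃ i j, 1 ≤ i ∧ i < j ∧ j ≤ r ∧ (v = stdVec r i - stdVec r j ∨ v = stdVec r i + stdVec r j)}

/-- `f` is a quasi-polynomial of degree exactly `d` on positive integers. -/
def IsQuasiPolyOfDegree (f : ℕ → ℕ) (d : ℕ) : Prop :=
  ∃ T : ℕ, 0 < T ∧ ∃ P : ℕ → Polynomial ℚ,
    (∀ k < T, (P k).degree = (d : ℕ)) ∧ ∀ N : ℕ, 0 < N → (f N : ℚ) = (P (N % T)).eval (N : ℚ)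

end

/-!
Choose `δ > 0` with `2δ ≤ λ_j - λ_{j+1}` for `1 ≤ j < r` and `2δ ≤ λ_{r-1} + λ_r`; strict
dominance of `λ` is exactly what makes this possible. Take the pattern all of whose `x`-rows
equal `λ` and with `y_{i,j} = λ_{j+1} + δ`. Raising any of its free coordinates by at most `δ`
keeps every BZ inequality, so `BZ_λ` contains this pattern together with its translates by `δ`
along each of the `r(r-1)` coordinate directions, and its affine span is the whole space.
-/

open Module Submodule

theorem finrank_vectorSpan_eq_card_of_add_single_mem {K ι : Type*} [Field K] [DecidableEq ι]
    {A : Set (ι → K)} {s : Finset ι} {p : ι → K} {δ : K} (hp : p ∈ A) (hδ : δ ≠ 0)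
    (hfix : ∀ q ∈ A, ∀ i ∉ s, q i = p i) (hsingle : ∀ i ∈ s, p + Pi.single i δ ∈ A) :
    finrank K (vectorSpan K A) = s.card := by
  have hspan : vectorSpan K A = span K ((fun i => Pi.single i 1) '' s) := by
    apply le_antisymm
    · rw [vectorSpan_eq_span_vsub_set_right K hp, span_le]
      rintro _ ⟨q, hq, rfl⟩
      have hsum : q - p = ∑ i ∈ s, (q - p) i • Pi.single i (1 : K) := by
        ext j
        by_cases hj : j ∈ s <;> simp [Finset.sum_apply, Pi.single_apply, hj, hfix q hq]
      change q - p ∈ _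
      rw [hsum]
      exact sum_mem fun i hi => smul_mem _ _ (subset_span ⟨i, hi, rfl⟩)
    · rw [span_le]
      rintro _ ⟨i, hi, rfl⟩
      have h := smul_mem _ δ⁻¹ (vsub_mem_vectorSpan K (hsingle i hi) hp)
      rwa [vsub_eq_sub, add_sub_cancel_left, ← Pi.single_smul, smul_eq_mul, inv_mul_cancel₀ hδ] at h
  rw [hspan, Set.image_eq_range, ← Fintype.card_coe]
  exact finrank_span_eq_card ((Pi.linearIndependent_single_one ι K).comp _ Subtype.val_injective)

theorem affDim_image_linearEquiv {V W : Type*} [AddCommGroup V] [Module ℝ V] [AddCommGroup W]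
    [Module ℝ W] (e : V ≃ₗ[ℝ] W) (A : Set V) : affDim (e '' A) = affDim A := by
  rw [affDim, affDim, ← e.finrank_map_eq]
  exact congrArg (fun U : Submodule ℝ W => finrank ℝ U)
    (AffineMap.map_vectorSpan e.toLinearMap.toAffineMap).symm

open Finset in
lemma card_product_Icc_filter_lt (r : ℕ) :
    #{c ∈ Icc 1 r ×ˢ Icc 1 r | c.1 < c.2} = r.choose 2 := by
  rw [card_product_filter_lt, Nat.card_Icc, Nat.add_sub_cancel]

namespace BZsetD

open Finset

def coords : ((ℕ → ℕ → ℝ) × (ℕ → ℕ → ℝ)) ≃ₗ[ℝ] (ℕ × ℕ ⊕ ℕ × ℕ → ℝ) :=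
  ((LinearEquiv.curry ℝ ℝ ℕ ℕ).symm.prodCongr (LinearEquiv.curry ℝ ℝ ℕ ℕ).symm).trans
    (LinearEquiv.sumArrowLequivProdArrow _ _ ℝ ℝ).symm

@[simp]
lemma coords_inl (p : (ℕ → ℕ → ℝ) × (ℕ → ℕ → ℝ)) (i j : ℕ) :
    coords p (.inl (i, j)) = p.1 i j := rfl

@[simp]
lemma coords_inr (p : (ℕ → ℕ → ℝ) × (ℕ → ℕ → ℝ)) (i j : ℕ) :
    coords p (.inr (i, j)) = p.2 i j := rfl

@[simp]
lemma coords_symm_fst (f : ℕ × ℕ ⊕ ℕ × ℕ → ℝ) (i j : ℕ) :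
    (coords.symm f).1 i j = f (.inl (i, j)) := rfl

@[simp]
lemma coords_symm_snd (f : ℕ × ℕ ⊕ ℕ × ℕ → ℝ) (i j : ℕ) :
    (coords.symm f).2 i j = f (.inr (i, j)) := rfl

def freeX (r : ℕ) : Finset (ℕ × ℕ) := {c ∈ Icc 2 r ×ˢ Icc 2 r | c.1 ≤ c.2}

def freeY (r : ℕ) : Finset (ℕ × ℕ) := {c ∈ Icc 1 (r - 1) ×ˢ Icc 1 (r - 1) | c.1 ≤ c.2}

def freeCoords (r : ℕ) : Finset (ℕ × ℕ ⊕ ℕ × ℕ) := (freeX r).disjSum (freeY r)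

lemma inl_mem_freeCoords {r i j : ℕ} :
    Sum.inl (i, j) ∈ freeCoords r ↔ 2 ≤ i ∧ i ≤ j ∧ j ≤ r := by
  simp only [freeCoords, freeX, inl_mem_disjSum, mem_filter, mem_product, mem_Icc]
  omega

lemma inr_mem_freeCoords {r i j : ℕ} :
    Sum.inr (i, j) ∈ freeCoords r ↔ 1 ≤ i ∧ i ≤ j ∧ j + 1 ≤ r := by
  simp only [freeCoords, freeY, inr_mem_disjSum, mem_filter, mem_product, mem_Icc]
  omega

lemma card_freeX (r : ℕ) : #(freeX r) = r.choose 2 := by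
  rw [← card_product_Icc_filter_lt]
  refine card_nbij' (fun c => (c.1 - 1, c.2)) (fun c => (c.1 + 1, c.2)) ?_ ?_ ?_ ?_ <;>
    intro c hc <;> simp [freeX, Prod.ext_iff] at hc ⊢ <;> omega

lemma card_freeY (r : ℕ) : #(freeY r) = r.choose 2 := by
  rw [← card_product_Icc_filter_lt]
  refine card_nbij' (fun c => (c.1, c.2 + 1)) (fun c => (c.1, c.2 - 1)) ?_ ?_ ?_ ?_ <;>
    intro c hc <;> simp [freeY, Prod.ext_iff] at hc ⊢ <;> omega

lemma card_freeCoords (r : ℕ) : #(freeCoords r) = r * (r - 1) := by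
  rw [freeCoords, card_disjSum, card_freeX, card_freeY, ← two_mul, Nat.choose_two_right,
    Nat.two_mul_div_two_of_even (Nat.even_mul_pred_self r)]

variable {r : ℕ} {lam : ℕ → ℝ} {δ : ℝ}

open Filter Topology in
lemma exists_margin (hdec : ∀ i, 1 ≤ i → i < r - 1 → lam (i + 1) < lam i)
    (habs : |lam r| < lam (r - 1)) :
    ∃ δ > 0, 2 * δ ≤ lam (r - 1) + lam r ∧
      ∀ j, 1 ≤ j → j + 1 ≤ r → 2 * δ ≤ lam j - lam (j + 1) := by
  have hsum : 0 < lam (r - 1) + lam r := by linarith [neg_abs_le (lam r)]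
  have hgap : ∀ j ∈ Icc 1 (r - 1), 0 < lam j - lam (j + 1) := by
    intro j hj
    rw [mem_Icc] at hj
    rcases hj.2.lt_or_eq with hlt | rfl
    · linarith [hdec j hj.1 hlt]
    · rw [Nat.sub_add_cancel (by omega)]
      linarith [le_abs_self (lam r)]
  have hsmall : ∀ c : ℝ, 0 < c → ∀ᶠ δ in 𝓝[>] (0 : ℝ), 2 * δ ≤ c := fun c hc =>
    (((continuous_const.mul continuous_id).tendsto' 0 0 (mul_zero 2)).eventually
      (eventually_le_nhds hc)).filter_mono nhdsWithin_le_nhds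
  obtain ⟨δ, hδ, hδsum, hδgap⟩ := (eventually_mem_nhdsWithin.and ((hsmall _ hsum).and
    ((eventually_all_finset _).2 fun j hj => hsmall _ (hgap j hj)))).exists
  exact ⟨δ, hδ, hδsum, fun j hj hjr => hδgap j (mem_Icc.2 ⟨hj, by omega⟩)⟩

def center (r : ℕ) (lam : ℕ → ℝ) (δ : ℝ) : ℕ × ℕ ⊕ ℕ × ℕ → ℝ
  | .inl (i, j) => if 1 ≤ i ∧ i ≤ j ∧ j ≤ r then lam j else 0
  | .inr (i, j) => if 1 ≤ i ∧ i ≤ j ∧ j + 1 ≤ r then lam (j + 1) + δ else 0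

lemma coords_eq_center {p : (ℕ → ℕ → ℝ) × (ℕ → ℕ → ℝ)} (hp : p ∈ BZsetD r lam)
    {c : ℕ × ℕ ⊕ ℕ × ℕ} (hc : c ∉ freeCoords r) : coords p c = center r lam δ c := by
  obtain ⟨htop, -, hx0, hy0⟩ := hp
  rcases c with ⟨i, j⟩ | ⟨i, j⟩
  · rw [inl_mem_freeCoords] at hc
    by_cases h : 1 ≤ i ∧ i ≤ j ∧ j ≤ r
    · obtain rfl : i = 1 := by omega
      simp [center, h, htop j h.2.1 h.2.2]
    · simp [center, h, hx0 i j h]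
  · rw [inr_mem_freeCoords] at hc
    simp only [coords_inr, center, if_neg hc, hy0 i j hc]

section Margin

variable (hr : 2 ≤ r) (hsum : 2 * δ ≤ lam (r - 1) + lam r)
  (hgap : ∀ j, 1 ≤ j → j + 1 ≤ r → 2 * δ ≤ lam j - lam (j + 1))
include hr hsum hgap

lemma mem_of_near {p : (ℕ → ℕ → ℝ) × (ℕ → ℕ → ℝ)}
    (hx : ∀ i j, 1 ≤ i → i ≤ j → j ≤ r → lam j ≤ p.1 i j ∧ p.1 i j ≤ lam j + δ)
    (hy : ∀ i j, 1 ≤ i → i ≤ j → j + 1 ≤ r →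
      lam (j + 1) + δ ≤ p.2 i j ∧ p.2 i j ≤ lam (j + 1) + 2 * δ)
    (htop : ∀ j, 1 ≤ j → j ≤ r → p.1 1 j = lam j)
    (hx0 : ∀ i j, ¬(1 ≤ i ∧ i ≤ j ∧ j ≤ r) → p.1 i j = 0)
    (hy0 : ∀ i j, ¬(1 ≤ i ∧ i ≤ j ∧ j + 1 ≤ r) → p.2 i j = 0) :
    p ∈ BZsetD r lam := by
  have hr1 : r - 1 + 1 = r := by omega
  refine ⟨htop, ⟨?_, ?_, ?_, ?_, ?_⟩, hx0, hy0⟩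
  · intro i j hi hij hj
    linarith [(hy i j hi hij hj).2, (hx i j hi hij (by omega)).1, hgap j (by omega) hj]
  · intro i j hi hij hj
    linarith [(hy i j hi hij.le hj).2, (hx (i + 1) j (by omega) hij (by omega)).1,
      hgap j (by omega) hj]
  · intro i j hi hij hj
    constructor <;> linarith [(hy i j hi hij hj).1, (hx i (j + 1) hi (by omega) hj).2,
      (hx (i + 1) (j + 1) (by omega) (by omega) hj).2]
  · intro i hi hir
    have hy' := (hy i (r - 1) hi (by omega) (by omega)).2
    rw [hr1] at hy'
    linarith [(hx i r hi (by omega) le_rfl).1, (hx (i + 1) r (by omega) (by omega) le_rfl).1,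
      le_min (hx i (r - 1) hi (by omega) (by omega)).1
        (hx (i + 1) (r - 1) (by omega) (by omega) (by omega)).1]
  · have hy' := (hy (r - 1) (r - 1) (by omega) le_rfl (by omega)).2
    rw [hr1] at hy'
    linarith [(hx (r - 1) r (by omega) (by omega) le_rfl).1, (hx r r (by omega) le_rfl le_rfl).1,
      (hx (r - 1) (r - 1) (by omega) le_rfl (by omega)).1]

lemma mem_coords_image_of_near {f : ℕ × ℕ ⊕ ℕ × ℕ → ℝ}
    (hf : ∀ c, center r lam δ c ≤ f c ∧ f c ≤ center r lam δ c + δ)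
    (hfix : ∀ c ∉ freeCoords r, f c = center r lam δ c) :
    f ∈ coords '' BZsetD r lam := by
  refine ⟨coords.symm f, ?_, coords.apply_symm_apply f⟩
  apply mem_of_near hr hsum hgap
  · intro i j hi hij hj
    simpa [center, hi, hij, hj] using hf (.inl (i, j))
  · intro i j hi hij hj
    simpa [center, hi, hij, hj, two_mul, add_assoc] using hf (.inr (i, j))
  · intro j hj hjr
    simpa [center, hj, hjr] using hfix (.inl (1, j)) (by simp [inl_mem_freeCoords])
  · intro i j h
    simpa [center, h] using hfix (.inl (i, j)) (by rw [inl_mem_freeCoords]; omega)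
  · intro i j h
    simpa only [coords_symm_snd, center, if_neg h] using
      hfix (.inr (i, j)) (by rw [inr_mem_freeCoords]; omega)

end Margin

end BZsetD

/-- **Full-dimensionality of the type `D` BZ-polytope for strictly dominant `λ`.**
If `λ_1 > λ_2 > … > λ_{r−1} > |λ_r|`, then the type `D` BZ-polytope `BZ_λ` is
full-dimensional: its affine dimension equals `r(r−1)` (equivalently, it has nonempty
interior in `ℝ^{r(r−1)}`). -/
theorem BZ_polytope_D_full_dimensional
    (r : ℕ) (hr : 3 ≤ r) (lam : ℕ → ℝ)
    (hdec : ∀ i, 1 ≤ i → i < r - 1 → lam (i + 1) < lam i)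
    (habs : |lam r| < lam (r - 1)) :
    affDim (BZsetD r lam) = r * (r - 1) := by
  obtain ⟨δ, hδ, hsum, hgap⟩ := BZsetD.exists_margin hdec habs
  have hmem := fun f => BZsetD.mem_coords_image_of_near (f := f) (by omega) hsum hgap
  rw [← affDim_image_linearEquiv BZsetD.coords, affDim, ← BZsetD.card_freeCoords r]
  refine finrank_vectorSpan_eq_card_of_add_single_mem
    (hmem _ (fun c => ⟨le_rfl, by linarith⟩) fun _ _ => rfl) hδ.ne' ?_
    fun c hc => hmem _ (fun c' => ?_) fun c' hc' => ?_
  · rintro _ ⟨q, hq, rfl⟩ c hc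
    exact BZsetD.coords_eq_center hq hc
  · rcases eq_or_ne c' c with rfl | hne
    · simp [hδ.le]
    · simp [hne, hδ.le]
  · simp [Pi.single_eq_of_ne (ne_of_mem_of_not_mem hc hc').symm]
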